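/- Let (f_*, f^*) be a Chu morphism of biextensional quantum Chu spaces from H to K with f_* injective. Then f_* preserves and reflects orthogonality: for all nonzero φ, ψ ∈ H, ⟪φ, ψ⟫ = 0 if and only if ⟪φ', ψ'⟫ = 0, where φ', ψ' are any representatives of f_*([φ]) and f_*([ψ]). -/

import Mathlib

/-!
The Chu condition at the values `e = 1` and `e = 0` says that `f^*` pulls membership and
orthogonality back along `f_*`: for `[ψ'] = f_*[ψ]`, `ψ ∈ f^* S ↔ ψ' ∈ S` and `ψ ∈ (f^* S)ᗮ ↔ ψ' ∈ Sᗮ`.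
For the line `S = ℂ ψ'` the first equivalence shows that every nonzero vector of `f^* S` is sent
to `[ψ'] = f_*[ψ]`, so when `f_*` is injective `f^*(ℂ ψ') = ℂ ψ`. The second equivalence then reads
`φ ⊥ ψ ↔ φ' ⊥ ψ'`.
-/

/-- The quantum evaluation `e(ψ, S) = ‖P_S ψ‖² / ‖ψ‖²` for a closed subspace `S`
of a complex Hilbert space. -/
noncomputable def qeval {H : Type*} [NormedAddCommGroup H] [InnerProductSpace ℂ H]
    [CompleteSpace H] (ψ : H) (S : Submodule ℂ H) (hS : IsClosed (S : Set H)) : ℝ :=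
  letI : CompleteSpace S := hS.completeSpace_coe
  ‖(S.orthogonalProjectionOnto ψ : H)‖ ^ 2 / ‖ψ‖ ^ 2

open Submodule

abbrev ClosedSubspace (H : Type*) [AddCommGroup H] [Module ℂ H] [TopologicalSpace H] :=
  {S : Submodule ℂ H // IsClosed (S : Set H)}

section QuantumEvaluation

variable {H : Type*} [NormedAddCommGroup H] [InnerProductSpace ℂ H] [CompleteSpace H]
  {ψ : H} {S : Submodule ℂ H}

theorem qeval_eq_one_iff (hψ : ψ ≠ 0) (hS : IsClosed (S : Set H)) :
    qeval ψ S hS = 1 ↔ ψ ∈ S := by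
  let : CompleteSpace S := hS.completeSpace_coe
  rw [qeval, div_eq_one_iff_eq (by positivity), mem_iff_norm_starProjection,
    starProjection_apply, sq_eq_sq₀ (norm_nonneg _) (norm_nonneg _)]

theorem qeval_eq_zero_iff (hψ : ψ ≠ 0) (hS : IsClosed (S : Set H)) :
    qeval ψ S hS = 0 ↔ ψ ∈ Sᗮ := by
  let : CompleteSpace S := hS.completeSpace_coe
  rw [qeval, div_eq_zero_iff, or_iff_left (by positivity), pow_eq_zero_iff two_ne_zero,
    norm_eq_zero, ZeroMemClass.coe_eq_zero, orthogonalProjectionOnto_eq_zero_iff]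

end QuantumEvaluation

def IsChuMorphism {H K : Type*} [NormedAddCommGroup H] [InnerProductSpace ℂ H] [CompleteSpace H]
    [NormedAddCommGroup K] [InnerProductSpace ℂ K] [CompleteSpace K]
    (f₁ : Projectivization ℂ H → Projectivization ℂ K)
    (f₂ : ClosedSubspace K → ClosedSubspace H) : Prop :=
  ∀ (ψ : H) (hψ : ψ ≠ 0) (S : ClosedSubspace K) (φ : K) (hφ : φ ≠ 0),
    Projectivization.mk ℂ φ hφ = f₁ (Projectivization.mk ℂ ψ hψ) →
    qeval ψ (f₂ S).1 (f₂ S).2 = qeval φ S.1 S.2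

namespace IsChuMorphism

variable {H K : Type*} [NormedAddCommGroup H] [InnerProductSpace ℂ H] [CompleteSpace H]
  [NormedAddCommGroup K] [InnerProductSpace ℂ K] [CompleteSpace K]
  {f₁ : Projectivization ℂ H → Projectivization ℂ K} {f₂ : ClosedSubspace K → ClosedSubspace H}
  {ψ : H} {hψ : ψ ≠ 0} {ψ' : K} {hψ' : ψ' ≠ 0}

theorem mem_pullback_iff (hf : IsChuMorphism f₁ f₂)
    (h : Projectivization.mk ℂ ψ' hψ' = f₁ (Projectivization.mk ℂ ψ hψ)) (S : ClosedSubspace K) :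
    ψ ∈ (f₂ S).1 ↔ ψ' ∈ S.1 := by
  rw [← qeval_eq_one_iff hψ (f₂ S).2, ← qeval_eq_one_iff hψ', hf ψ hψ S ψ' hψ' h]

theorem mem_orthogonal_pullback_iff (hf : IsChuMorphism f₁ f₂)
    (h : Projectivization.mk ℂ ψ' hψ' = f₁ (Projectivization.mk ℂ ψ hψ)) (S : ClosedSubspace K) :
    ψ ∈ (f₂ S).1ᗮ ↔ ψ' ∈ S.1ᗮ := by
  rw [← qeval_eq_zero_iff hψ (f₂ S).2, ← qeval_eq_zero_iff hψ', hf ψ hψ S ψ' hψ' h]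

theorem pullback_span_singleton (hf : IsChuMorphism f₁ f₂) (hinj : Function.Injective f₁)
    (h : Projectivization.mk ℂ ψ' hψ' = f₁ (Projectivization.mk ℂ ψ hψ)) :
    (f₂ ⟨ℂ ∙ ψ', (ℂ ∙ ψ').closed_of_finiteDimensional⟩).1 = ℂ ∙ ψ := by
  refine le_antisymm (fun χ hχ => ?_) ((span_singleton_le_iff_mem _ _).2 ?_)
  · rcases eq_or_ne χ 0 with rfl | hχ0
    · exact zero_mem _
    set p := f₁ (Projectivization.mk ℂ χ hχ0)
    have hp : p.rep ∈ ℂ ∙ ψ' := (hf.mem_pullback_iff p.mk_rep _).1 hχ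
    have hpψ : p = f₁ (Projectivization.mk ℂ ψ hψ) := by
      rw [← h, ← p.mk_rep, Projectivization.mk_eq_mk_iff']
      exact mem_span_singleton.1 hp
    exact mem_span_singleton.2 ((Projectivization.mk_eq_mk_iff' ℂ _ _ _ _).1 (hinj hpψ))
  · exact (hf.mem_pullback_iff h _).2 (mem_span_singleton_self ψ')

end IsChuMorphism

/-- Let `(f₁, f₂)` be a Chu morphism of biextensional quantum Chu spaces from `H` to `K`
with `f₁` injective.  Then `f₁` preserves and reflects orthogonality: for nonzero
`φ, ψ ∈ H`, `⟪φ, ψ⟫ = 0` iff `⟪φ', ψ'⟫ = 0`, where `φ'`, `ψ'` are any representatives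
of `f₁ [φ]` and `f₁ [ψ]`. -/
theorem chu_injective_preserves_reflects_orthogonality
    {H K : Type*} [NormedAddCommGroup H] [InnerProductSpace ℂ H] [CompleteSpace H]
    [NormedAddCommGroup K] [InnerProductSpace ℂ K] [CompleteSpace K]
    (f₁ : Projectivization ℂ H → Projectivization ℂ K)
    (f₂ : {S : Submodule ℂ K // IsClosed (S : Set K)} →
          {S : Submodule ℂ H // IsClosed (S : Set H)})
    (hchu : ∀ (ψ : H) (hψ : ψ ≠ 0) (S : {S : Submodule ℂ K // IsClosed (S : Set K)})
      (φ : K) (hφ : φ ≠ 0), Projectivization.mk ℂ φ hφ = f₁ (Projectivization.mk ℂ ψ hψ) →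
      qeval ψ (f₂ S).1 (f₂ S).2 = qeval φ S.1 S.2)
    (hinj : Function.Injective f₁) :
    ∀ (φ ψ : H) (hφ : φ ≠ 0) (hψ : ψ ≠ 0) (φ' ψ' : K) (hφ' : φ' ≠ 0) (hψ' : ψ' ≠ 0),
      Projectivization.mk ℂ φ' hφ' = f₁ (Projectivization.mk ℂ φ hφ) →
      Projectivization.mk ℂ ψ' hψ' = f₁ (Projectivization.mk ℂ ψ hψ) →
      (inner ℂ φ ψ = (0 : ℂ) ↔ inner ℂ φ' ψ' = (0 : ℂ)) := by
  intro φ ψ hφ hψ φ' ψ' hφ' hψ' hfφ hfψ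
  have hline := IsChuMorphism.mem_orthogonal_pullback_iff hchu hfφ
    ⟨ℂ ∙ ψ', (ℂ ∙ ψ').closed_of_finiteDimensional⟩
  rw [IsChuMorphism.pullback_span_singleton hchu hinj hfψ] at hline
  simpa only [mem_orthogonal_singleton_iff_inner_right, inner_eq_zero_symm] using hline
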